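/- Let (M,L) be a regular Hamiltonian pair of 2n×2n complex matrices, i.e., M J L^H = −L J M^H where J = [[0, I_n],[−I_n, 0]]. Suppose U₁ ∈ ℂ^{2n×r₁}, U₂ ∈ ℂ^{2n×r₂} have full column rank, (R₁,T₁) and (R₂,T₂) are regular pairs, M U₁ T₁ = L U₁ R₁ and M U₂ T₂ = L U₂ R₂. If σ(R₁,T₁) ∩ σ(−R₂^H, T₂^H) = ∅, then U₂^H J U₁ = 0. -/

import Mathlib

/-!
Choose a purely imaginary shift `c` at which `M - cL`, `R₁ - cT₁` and `R₂ - cT₂` are all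
invertible (regularity leaves only finitely many bad `c`). Because `c̄ = -c`, the pair
`(M - cL, L)` is still Hamiltonian, so `H = (M - cL)⁻¹L` satisfies `Hᴴ J = -J H`, and
`H Uᵢ = Uᵢ Pᵢ` with `Pᵢ = Tᵢ (Rᵢ - cTᵢ)⁻¹`. Hence `X = U₂ᴴ J U₁` solves the Sylvester equation
`X P₁ = -P₂ᴴ X`. The map `μ ↦ c + μ⁻¹` (with `0 ↦ ∞`) sends the spectra of `P₁` and `-P₂ᴴ` into
`σ(R₁,T₁)` and `σ(-R₂ᴴ,T₂ᴴ)`, so these spectra are disjoint and `X = 0`.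
-/

open Matrix

/-- The generalized spectrum of a matrix pair `(A, B)`: finite eigenvalues `some λ` with
`det (A - λ B) = 0`, and the infinite eigenvalue `none` when `B` is singular. -/
def genSpec {m : ℕ} (A B : Matrix (Fin m) (Fin m) ℂ) : Set (Option ℂ) :=
  {x | match x with
    | some lam => (A - lam • B).det = 0
    | none => ¬ IsUnit B.det}

/-- A matrix pair `(A, B)` is regular if `det (A - λ B) ≠ 0` for some `λ ∈ ℂ`. -/
def IsRegularPair {m : ℕ} (A B : Matrix (Fin m) (Fin m) ℂ) : Prop :=
  ∃ lam : ℂ, (A - lam • B).det ≠ 0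

/-- The matrix `J = [[0, Iₙ], [−Iₙ, 0]]`. -/
def Jmat (n : ℕ) : Matrix (Fin n ⊕ Fin n) (Fin n ⊕ Fin n) ℂ :=
  Matrix.fromBlocks 0 1 (-1) 0

open Polynomial

lemma Jmat_mul_self (n : ℕ) : Jmat n * Jmat n = -1 := by
  rw [Jmat, fromBlocks_multiply, ← fromBlocks_one, fromBlocks_neg]
  simp

section Sylvester

variable {K ι κ : Type*} [Fintype ι] [DecidableEq ι] [Fintype κ] [DecidableEq κ]

lemma mul_aeval_eq_aeval_mul [CommSemiring K] {P : Matrix ι ι K} {Q : Matrix κ κ K}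
    {X : Matrix κ ι K} (h : X * P = Q * X) (f : K[X]) :
    X * aeval P f = aeval Q f * X := by
  induction f using Polynomial.induction_on' with
  | add p q hp hq => rw [map_add, map_add, Matrix.mul_add, Matrix.add_mul, hp, hq]
  | monomial k a =>
    have hpow : X * P ^ k = Q ^ k * X := by
      induction k with
      | zero => simp
      | succ k ih => rw [pow_succ, pow_succ, ← Matrix.mul_assoc, ih, Matrix.mul_assoc, h,
          ← Matrix.mul_assoc]
    simp only [aeval_monomial, Algebra.algebraMap_eq_smul_one, smul_mul_assoc, one_mul,
      Matrix.mul_smul, Matrix.smul_mul, hpow]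

theorem eq_zero_of_mul_eq_mul_of_disjoint_spectrum [Field K] [IsAlgClosed K]
    {P : Matrix ι ι K} {Q : Matrix κ κ K} {X : Matrix κ ι K} (h : X * P = Q * X)
    (hPQ : Disjoint (spectrum K P) (spectrum K Q)) : X = 0 := by
  cases isEmpty_or_nonempty κ
  · exact Subsingleton.elim _ _
  have hunit : IsUnit (aeval Q P.charpoly) := by
    rw [← spectrum.zero_notMem_iff K, spectrum.map_polynomial_aeval_of_nonempty _ _
      (spectrum.nonempty_of_isAlgClosed_of_finiteDimensional K Q)]
    rintro ⟨z, hzQ, hz⟩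
    exact Set.disjoint_right.mp hPQ hzQ (mem_spectrum_iff_isRoot_charpoly.mpr hz)
  have hX := mul_aeval_eq_aeval_mul h P.charpoly
  rw [aeval_self_charpoly, Matrix.mul_zero] at hX
  rw [← nonsing_inv_mul_cancel_left _ X ((isUnit_iff_isUnit_det _).mp hunit), ← hX,
    Matrix.mul_zero]

end Sylvester

section Pencil

variable {K ι : Type*} [Field K] [Fintype ι] [DecidableEq ι]

lemma eval_det_C_sub_X_smul (A B : Matrix ι ι K) (c : K) :
    (A.map C - (X : K[X]) • B.map C).det.eval c = (A - c • B).det := by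
  rw [← coe_evalRingHom, RingHom.map_det]
  congr 1
  ext i j
  simp [mul_comm _ c]

lemma finite_setOf_det_sub_smul_eq_zero {A B : Matrix ι ι K}
    (hreg : ∃ lam : K, (A - lam • B).det ≠ 0) : {c : K | (A - c • B).det = 0}.Finite := by
  obtain ⟨lam, hlam⟩ := hreg
  have hp : (A.map C - (X : K[X]) • B.map C).det ≠ 0 := fun h0 ↦
    hlam (by rw [← eval_det_C_sub_X_smul, h0, eval_zero])
  simpa only [IsRoot.def, eval_det_C_sub_X_smul] using finite_setOfPred_isRoot hp

variable {P S T : Matrix ι ι K} {μ : K}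

lemma det_smul_sub_eq_zero_of_mem_spectrum_of_mul_eq (hP : P * S = T)
    (hμ : μ ∈ spectrum K P) : (μ • S - T).det = 0 := by
  have hfac : μ • S - T = (algebraMap K _ μ - P) * S := by
    rw [Matrix.sub_mul, ← hP, Algebra.algebraMap_eq_smul_one, Matrix.smul_mul, Matrix.one_mul]
  rw [spectrum.mem_iff, isUnit_iff_isUnit_det, isUnit_iff_ne_zero, not_not] at hμ
  rw [hfac, det_mul, hμ, zero_mul]

lemma det_smul_sub_eq_zero_of_mem_spectrum_of_mul_eq' (hP : S * P = T)
    (hμ : μ ∈ spectrum K P) : (μ • S - T).det = 0 := by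
  have hfac : μ • S - T = S * (algebraMap K _ μ - P) := by
    rw [Matrix.mul_sub, hP, Algebra.algebraMap_eq_smul_one, Matrix.mul_smul, Matrix.mul_one]
  rw [spectrum.mem_iff, isUnit_iff_isUnit_det, isUnit_iff_ne_zero, not_not] at hμ
  rw [hfac, det_mul, hμ, mul_zero]

end Pencil

/-- The inverse of the shift-and-invert map `λ ↦ (λ - c)⁻¹`, sending `0` to `∞ = none`. -/
noncomputable def shiftInvertSymm (c μ : ℂ) : Option ℂ :=
  if μ = 0 then none else some (c + μ⁻¹)

lemma shiftInvertSymm_mem_genSpec {m : ℕ} {R T : Matrix (Fin m) (Fin m) ℂ} {c μ : ℂ}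
    (h : (μ • (R - c • T) - T).det = 0) : shiftInvertSymm c μ ∈ genSpec R T := by
  unfold shiftInvertSymm
  split_ifs with hμ
  · subst hμ
    simpa [genSpec, det_neg] using h
  · have hfac : μ • (R - c • T) - T = μ • (R - (c + μ⁻¹) • T) := by
      rw [add_smul, smul_sub, smul_sub, smul_add, smul_smul μ μ⁻¹, mul_inv_cancel₀ hμ, one_smul]
      abel
    simpa [genSpec, hfac, det_smul, hμ] using h

lemma exists_star_eq_neg_notMem {F : Set ℂ} (hF : F.Finite) :
    ∃ c : ℂ, star c = -c ∧ c ∉ F := by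
  have hinj : Function.Injective fun d : ℝ ↦ Complex.I * d := fun a b h ↦ by simpa using h
  obtain ⟨d, hd⟩ := (hF.preimage hinj.injOn).infinite_compl.nonempty
  exact ⟨Complex.I * d, by simp, hd⟩

section Hamiltonian

variable {ι κ κ' : Type*} [Fintype ι] [Fintype κ] [Fintype κ']

lemma sub_smul_mul_mul_conjTranspose {M L J : Matrix ι ι ℂ} {c : ℂ} (hc : star c = -c)
    (hham : M * J * Lᴴ = -(L * J * Mᴴ)) :
    (M - c • L) * J * Lᴴ = -(L * J * (M - c • L)ᴴ) := by
  rw [conjTranspose_sub, conjTranspose_smul, hc]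
  simp only [Matrix.sub_mul, Matrix.mul_sub, Matrix.smul_mul, neg_smul, Matrix.mul_neg,
    Matrix.mul_smul, hham]
  abel

lemma conjTranspose_inv_mul_mul [DecidableEq ι] {N L J : Matrix ι ι ℂ} (hN : IsUnit N.det)
    (hJ : J * J = -1) (hham : N * J * Lᴴ = -(L * J * Nᴴ)) :
    (N⁻¹ * L)ᴴ * J = -(J * (N⁻¹ * L)) := by
  set H := N⁻¹ * L
  have hNH : IsUnit Nᴴ.det := by rwa [det_conjTranspose, isUnit_star]
  have hJL : J * Lᴴ = -(H * J * Nᴴ) := by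
    rw [← nonsing_inv_mul_cancel_left N (J * Lᴴ) hN, ← Matrix.mul_assoc N, hham]
    simp only [H, Matrix.mul_neg, Matrix.mul_assoc]
  have hJH : J * Hᴴ = -(H * J) := by
    rw [conjTranspose_mul, conjTranspose_nonsing_inv, ← Matrix.mul_assoc, hJL, Matrix.neg_mul,
      mul_nonsing_inv_cancel_right _ _ hNH]
  calc Hᴴ * J = -(J * (J * Hᴴ) * J) := by
        rw [← Matrix.mul_assoc, hJ]; simp
    _ = -(J * H) := by
        rw [hJH, Matrix.mul_neg, Matrix.neg_mul, neg_neg, ← Matrix.mul_assoc, Matrix.mul_assoc,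
          hJ, Matrix.mul_neg, Matrix.mul_one]

lemma inv_sub_smul_mul_mul_eq [DecidableEq ι] [DecidableEq κ] {M L : Matrix ι ι ℂ}
    {U : Matrix ι κ ℂ} {P R T : Matrix κ κ ℂ} {c : ℂ} (hN : IsUnit (M - c • L).det)
    (hS : IsUnit (R - c • T).det) (hP : P * (R - c • T) = T) (heq : M * U * T = L * U * R) :
    (M - c • L)⁻¹ * L * U = U * P := by
  have hLU : L * U * (R - c • T) = (M - c • L) * U * P * (R - c • T) := by
    simp only [Matrix.mul_assoc, hP]
    simp only [Matrix.mul_sub, Matrix.sub_mul, Matrix.mul_smul, Matrix.smul_mul,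
      ← Matrix.mul_assoc, heq]
  have hLU' : L * U = (M - c • L) * U * P := by
    rw [← mul_nonsing_inv_cancel_right _ (L * U) hS, hLU, mul_nonsing_inv_cancel_right _ _ hS]
  rw [Matrix.mul_assoc, hLU', Matrix.mul_assoc, nonsing_inv_mul_cancel_left _ _ hN]

lemma mul_mul_eq_neg_conjTranspose_mul {H J : Matrix ι ι ℂ} {U₁ : Matrix ι κ ℂ}
    {U₂ : Matrix ι κ' ℂ} {P₁ : Matrix κ κ ℂ} {P₂ : Matrix κ' κ' ℂ}
    (hH : Hᴴ * J = -(J * H)) (h₁ : H * U₁ = U₁ * P₁) (h₂ : H * U₂ = U₂ * P₂) :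
    U₂ᴴ * J * U₁ * P₁ = -P₂ᴴ * (U₂ᴴ * J * U₁) := by
  calc U₂ᴴ * J * U₁ * P₁ = U₂ᴴ * (J * H) * U₁ := by
        rw [Matrix.mul_assoc, ← h₁, Matrix.mul_assoc U₂ᴴ, Matrix.mul_assoc U₂ᴴ,
          Matrix.mul_assoc J]
    _ = -((H * U₂)ᴴ * J * U₁) := by
        rw [conjTranspose_mul, ← neg_neg (J * H), ← hH]
        simp only [Matrix.mul_assoc, Matrix.mul_neg, Matrix.neg_mul]
    _ = -P₂ᴴ * (U₂ᴴ * J * U₁) := by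
        rw [h₂, conjTranspose_mul]; simp only [Matrix.mul_assoc, Matrix.neg_mul]

lemma sub_smul_conjTranspose_mul_neg_conjTranspose {P R T : Matrix κ κ ℂ} {c : ℂ}
    (hc : star c = -c) (hP : P * (R - c • T) = T) : (-Rᴴ - c • Tᴴ) * -Pᴴ = Tᴴ := by
  have h := congrArg conjTranspose hP
  rw [conjTranspose_mul, conjTranspose_sub, conjTranspose_smul, hc, neg_smul, sub_neg_eq_add] at h
  rw [Matrix.mul_neg, ← Matrix.neg_mul, neg_sub', neg_neg, sub_neg_eq_add, h]

end Hamiltonian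

theorem hamiltonian_pair_J_orthogonal_general {n r₁ r₂ : ℕ}
    (M L : Matrix (Fin n ⊕ Fin n) (Fin n ⊕ Fin n) ℂ)
    (hreg : ∃ lam : ℂ, (M - lam • L).det ≠ 0)
    (hham : M * Jmat n * Lᴴ = -(L * Jmat n * Mᴴ))
    (U₁ : Matrix (Fin n ⊕ Fin n) (Fin r₁) ℂ) (U₂ : Matrix (Fin n ⊕ Fin n) (Fin r₂) ℂ)
    (R₁ T₁ : Matrix (Fin r₁) (Fin r₁) ℂ) (R₂ T₂ : Matrix (Fin r₂) (Fin r₂) ℂ)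
    (hreg₁ : IsRegularPair R₁ T₁) (hreg₂ : IsRegularPair R₂ T₂)
    (heq₁ : M * U₁ * T₁ = L * U₁ * R₁) (heq₂ : M * U₂ * T₂ = L * U₂ * R₂)
    (hdisj : Disjoint (genSpec R₁ T₁) (genSpec (-R₂ᴴ) T₂ᴴ)) :
    U₂ᴴ * Jmat n * U₁ = 0 := by
  obtain ⟨c, hc, hcF⟩ := exists_star_eq_neg_notMem <|
    (finite_setOf_det_sub_smul_eq_zero hreg).union <|
      (finite_setOf_det_sub_smul_eq_zero hreg₁).union (finite_setOf_det_sub_smul_eq_zero hreg₂)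
  simp only [Set.mem_union, Set.mem_ofPred_eq, not_or, ← isUnit_iff_ne_zero] at hcF
  obtain ⟨hN, hS₁, hS₂⟩ := hcF
  have hP₁ : T₁ * (R₁ - c • T₁)⁻¹ * (R₁ - c • T₁) = T₁ := nonsing_inv_mul_cancel_right _ _ hS₁
  have hP₂ : T₂ * (R₂ - c • T₂)⁻¹ * (R₂ - c • T₂) = T₂ := nonsing_inv_mul_cancel_right _ _ hS₂
  have hH := conjTranspose_inv_mul_mul hN (Jmat_mul_self n)
    (sub_smul_mul_mul_conjTranspose hc hham)
  refine eq_zero_of_mul_eq_mul_of_disjoint_spectrum (mul_mul_eq_neg_conjTranspose_mul hH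
    (inv_sub_smul_mul_mul_eq hN hS₁ hP₁ heq₁) (inv_sub_smul_mul_mul_eq hN hS₂ hP₂ heq₂)) ?_
  exact Set.disjoint_left.mpr fun μ h₁ h₂ ↦ Set.disjoint_left.mp hdisj
    (shiftInvertSymm_mem_genSpec (det_smul_sub_eq_zero_of_mem_spectrum_of_mul_eq hP₁ h₁))
    (shiftInvertSymm_mem_genSpec (det_smul_sub_eq_zero_of_mem_spectrum_of_mul_eq'
      (sub_smul_conjTranspose_mul_neg_conjTranspose hc hP₂) h₂))

/-- Theorem 2.2 (i): if `(M, L)` is a regular Hamiltonian pair, `U₁, U₂` are of full column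
rank with `M U₁ T₁ = L U₁ R₁`, `M U₂ T₂ = L U₂ R₂`, `(R₁,T₁)` and `(R₂,T₂)` regular pairs, and
`σ(R₁,T₁) ∩ σ(−R₂ᴴ,T₂ᴴ) = ∅`, then `U₁` and `U₂` are `J`-orthogonal: `U₂ᴴ J U₁ = 0`. -/
theorem hamiltonian_pair_J_orthogonal {n r₁ r₂ : ℕ}
    (M L : Matrix (Fin n ⊕ Fin n) (Fin n ⊕ Fin n) ℂ)
    (hreg : ∃ lam : ℂ, (M - lam • L).det ≠ 0)
    (hham : M * Jmat n * Lᴴ = -(L * Jmat n * Mᴴ))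
    (U₁ : Matrix (Fin n ⊕ Fin n) (Fin r₁) ℂ) (U₂ : Matrix (Fin n ⊕ Fin n) (Fin r₂) ℂ)
    (hU₁ : U₁.rank = r₁) (hU₂ : U₂.rank = r₂)
    (R₁ T₁ : Matrix (Fin r₁) (Fin r₁) ℂ) (R₂ T₂ : Matrix (Fin r₂) (Fin r₂) ℂ)
    (hreg₁ : IsRegularPair R₁ T₁) (hreg₂ : IsRegularPair R₂ T₂)
    (heq₁ : M * U₁ * T₁ = L * U₁ * R₁) (heq₂ : M * U₂ * T₂ = L * U₂ * R₂)
    (hdisj : Disjoint (genSpec R₁ T₁) (genSpec (-R₂ᴴ) T₂ᴴ)) :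
    U₂ᴴ * Jmat n * U₁ = 0 :=
  hamiltonian_pair_J_orthogonal_general M L hreg hham U₁ U₂ R₁ T₁ R₂ T₂ hreg₁ hreg₂ heq₁ heq₂ hdisj
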